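/- Let G be a graph on n vertices and let cl_k(G) denote its k-closure. Then G contains no linear forest with k edges if and only if cl_k(G) contains no linear forest with k edges. -/

import Mathlib

/-- A linear forest is a graph all of whose connected components are paths or
isolated vertices; equivalently, an acyclic graph of maximum degree at most 2. -/
def IsLinearForest {V : Type*} (F : SimpleGraph V) : Prop :=
  F.IsAcyclic ∧ ∀ v : V, (F.neighborSet v).ncard ≤ 2

/-- A single step of the `k`-closure operation: join two nonadjacent vertices whose
degree sum is at least `k`. -/
inductive ClosureStep {V : Type*} (k : ℕ) : SimpleGraph V → SimpleGraph V → Prop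
  | step (G : SimpleGraph V) (u v : V) (hne : u ≠ v) (hadj : ¬ G.Adj u v)
      (hdeg : k ≤ (G.neighborSet u).ncard + (G.neighborSet v).ncard) :
      ClosureStep k G (G ⊔ SimpleGraph.fromEdgeSet {s(u, v)})

/-- `H` is the `k`-closure of `G`: it is obtained from `G` by iteratively joining
nonadjacent vertices with degree sum at least `k`, until no such pair remains. -/
def IsKClosure {V : Type*} (k : ℕ) (G H : SimpleGraph V) : Prop :=
  Relation.ReflTransGen (ClosureStep k) G H ∧
  ∀ u v : V, u ≠ v → ¬ H.Adj u v →
    (H.neighborSet u).ncard + (H.neighborSet v).ncard < k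

/-!
One direction holds because closure steps only add edges. For the other it suffices to undo a
single step: let `G + uv` contain a linear forest with `k` edges through `uv`, where
`deg u + deg v ≥ k` in `G`. Deleting `uv` leaves a linear forest `F ≤ G` with `k - 1` edges in
which `u` and `v` are ends of different paths. Suppose `G` has no linear forest with `k` edges and
orient the paths of `F`: towards `u` in its component, away from `v` in its component, and towards
a chosen end elsewhere. Every `G`-neighbour `a` of `u` then has an out-edge `a → a⁺` (otherwise
`F + ua` is larger), every `G`-neighbour `b` of `v` has an in-edge `b⁻ → b` (otherwise `F + vb`
is), and no edge `a → b` joins a neighbour of `u` to a neighbour of `v` (otherwise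
`F - ab + ua + vb` is). So these edges are pairwise distinct, and `deg u + deg v ≤ k - 1`.
-/

namespace SimpleGraph

variable {V : Type*} {F F' G : SimpleGraph V} {a b r u v x y z : V}

def HasLinearForest (G : SimpleGraph V) (m : ℕ) : Prop :=
  ∃ F : SimpleGraph V, F ≤ G ∧ IsLinearForest F ∧ F.edgeSet.ncard = m

theorem HasLinearForest.mono {m : ℕ} (h : G ≤ G') (hG : G.HasLinearForest m) :
    G'.HasLinearForest m :=
  let ⟨F, hFG, hF, hm⟩ := hG
  ⟨F, hFG.trans h, hF, hm⟩

theorem Reachable.exists_adj_dist_lt (h : F.Reachable r x) (hne : r ≠ x) :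
    ∃ y, F.Adj x y ∧ F.dist r y < F.dist r x := by
  obtain ⟨P, -, hP⟩ := h.exists_path_of_dist
  have hnil : ¬P.Nil := Walk.not_nil_of_ne hne
  refine ⟨P.penultimate, (P.adj_penultimate hnil).symm, ?_⟩
  have := F.dist_le P.dropLast
  have := P.length_dropLast_add_one hnil
  omega

theorem IsAcyclic.eq_penultimate_of_dist_lt (hF : F.IsAcyclic) {P : F.Walk r x} (hP : P.IsPath)
    (hxy : F.Adj x y) (hy : F.dist r y < F.dist r x) : y = P.penultimate := by
  classical
  obtain ⟨Q, hQ, hQ_len⟩ := (P.reachable.trans hxy.reachable).exists_path_of_dist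
  refine hF.eq_penultimate_of_adj_end hP hxy
    (hF.mem_support_of_ne_mem_support_of_adj_of_isPath hP hQ hxy fun hx => ?_)
  have := (F.dist_le (Q.takeUntil x hx)).trans (Q.length_takeUntil_le_length hx)
  omega

theorem IsAcyclic.exists_adj_dist_gt (hF : F.IsAcyclic) (h : F.Reachable r x)
    (hx : 1 < (F.neighborSet x).ncard) : ∃ y, F.Adj x y ∧ F.dist r x < F.dist r y := by
  obtain ⟨y₁, y₂, hy₁, hy₂, hne⟩ :=
    (Set.one_lt_ncard_iff (Set.finite_of_ncard_pos (by omega))).mp hx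
  by_contra! hle
  have hlt : ∀ y, F.Adj x y → F.dist r y < F.dist r x := fun y hy =>
    (hle y hy).lt_of_ne (hF.dist_ne_of_adj hy h).symm
  obtain ⟨P, hP, -⟩ := h.exists_path_of_dist
  exact hne ((hF.eq_penultimate_of_dist_lt hP hy₁ (hlt _ hy₁)).trans
    (hF.eq_penultimate_of_dist_lt hP hy₂ (hlt _ hy₂)).symm)

theorem IsAcyclic.exists_reachable_ncard_neighborSet_le_one [Finite V] (hF : F.IsAcyclic)
    (x : V) : ∃ y, F.Reachable x y ∧ (F.neighborSet y).ncard ≤ 1 := by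
  obtain ⟨y, hxy, hmax⟩ := Set.exists_max_image {y | F.Reachable x y} (F.dist x)
    (Set.toFinite _) ⟨x, .refl x⟩
  refine ⟨y, hxy, not_lt.mp fun hy => ?_⟩
  obtain ⟨z, hyz, hz⟩ := hF.exists_adj_dist_gt hxy hy
  exact (hmax z (hxy.trans hyz.reachable)).not_gt hz

theorem Reachable.deleteEdges_of_dist_lt (h : F.Reachable r x) (hxy : F.dist r x < F.dist r y) :
    (F.deleteEdges {s(x, y)}).Reachable r x := by
  classical
  obtain ⟨P, -, hP⟩ := h.exists_path_of_dist
  refine ⟨P.toDeleteEdges _ fun e he hmem => ?_⟩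
  rw [Set.mem_singleton_iff] at hmem
  subst hmem
  have hy := P.snd_mem_support_of_mem_edges he
  have := (F.dist_le (P.takeUntil y hy)).trans (P.length_takeUntil_le_length hy)
  omega

theorem IsAcyclic.not_reachable_deleteEdges (hF : F.IsAcyclic) (h : F.Adj x y) :
    ¬(F.deleteEdges {s(x, y)}).Reachable x y :=
  isBridge_iff.mp (isAcyclic_iff_forall_adj_isBridge.mp hF h)

theorem Reachable.of_sup_edge (h : (F ⊔ edge x y).Reachable a b) :
    F.Reachable a b ∨ F.Reachable a x ∨ F.Reachable a y := by
  obtain ⟨p⟩ := h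
  induction p with
  | nil => exact .inl (.refl _)
  | cons hadj _ ih =>
    rcases hadj with hadj | hadj
    · exact ih.imp hadj.reachable.trans (Or.imp hadj.reachable.trans hadj.reachable.trans)
    · rcases (edge_adj ..).mp hadj with ⟨⟨rfl, rfl⟩ | ⟨rfl, rfl⟩, -⟩
      exacts [.inr (.inl (.refl _)), .inr (.inr (.refl _))]

theorem neighborSet_sup_edge_of_ne (hx : z ≠ x) (hy : z ≠ y) :
    (F ⊔ edge x y).neighborSet z = F.neighborSet z := by
  ext w
  simp [edge_adj, hx, hy]

theorem ncard_neighborSet_sup_edge_le [Finite V] (F : SimpleGraph V) (x y z : V) :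
    ((F ⊔ edge x y).neighborSet z).ncard ≤ (F.neighborSet z).ncard + 1 := by
  rw [neighborSet_sup]
  refine (Set.ncard_union_le _ _).trans (Nat.add_le_add_left ?_ _)
  refine (Set.ncard_le_one).mpr fun w₁ h₁ w₂ h₂ => ?_
  simp only [mem_neighborSet, edge_adj] at h₁ h₂
  grind

theorem ncard_edgeSet_sup_edge [Finite V] (hne : x ≠ y) (hn : ¬F.Adj x y) :
    (F ⊔ edge x y).edgeSet.ncard = F.edgeSet.ncard + 1 := by
  rw [edgeSet_sup, edgeSet_edge_of_ne hne, Set.union_singleton,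
    Set.ncard_insert_of_notMem (show s(x, y) ∉ F.edgeSet from hn)]

theorem ncard_edgeSet_deleteEdges_add_one [Finite V] (h : F.Adj x y) :
    (F.deleteEdges {s(x, y)}).edgeSet.ncard + 1 = F.edgeSet.ncard := by
  rw [edgeSet_deleteEdges]
  exact Set.ncard_sdiff_singleton_add_one h

theorem _root_.IsLinearForest.anti [Finite V] (h : F ≤ F') (hF' : IsLinearForest F') :
    IsLinearForest F :=
  ⟨hF'.1.anti h, fun x => (Set.ncard_le_ncard (neighborSet_mono h x)).trans (hF'.2 x)⟩

theorem _root_.IsLinearForest.sup_edge [Finite V] (hF : IsLinearForest F) (hr : ¬F.Reachable x y)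
    (hx : (F.neighborSet x).ncard ≤ 1) (hy : (F.neighborSet y).ncard ≤ 1) :
    IsLinearForest (F ⊔ edge x y) := by
  refine ⟨hF.1.sup_edge_of_not_reachable hr, fun z => ?_⟩
  obtain rfl | hzx := eq_or_ne z x
  · have := ncard_neighborSet_sup_edge_le F z y z
    omega
  obtain rfl | hzy := eq_or_ne z y
  · have := ncard_neighborSet_sup_edge_le F x z z
    omega
  rw [neighborSet_sup_edge_of_ne hzx hzy]
  exact hF.2 z

theorem _root_.IsLinearForest.ncard_neighborSet_deleteEdges_le_one [Finite V]
    (hF : IsLinearForest F) (h : F.Adj x y) :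
    ((F.deleteEdges {s(x, y)}).neighborSet x).ncard ≤ 1 := by
  have hnbr : (F.deleteEdges {s(x, y)}).neighborSet x = F.neighborSet x \ {y} := by
    ext w
    simp [h.ne, and_comm]
  rw [hnbr]
  have := Set.ncard_sdiff_singleton_add_one (show y ∈ F.neighborSet x from h)
  have := hF.2 x
  omega

theorem hasLinearForest_succ [Finite V] (hFG : F ≤ G) (hF : IsLinearForest F) (hxy : G.Adj x y)
    (hr : ¬F.Reachable x y) (hx : (F.neighborSet x).ncard ≤ 1)
    (hy : (F.neighborSet y).ncard ≤ 1) : G.HasLinearForest (F.edgeSet.ncard + 1) :=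
  ⟨F ⊔ edge x y, sup_le hFG ((edge_le_iff G).mpr (.inr hxy)), hF.sup_edge hr hx hy,
    ncard_edgeSet_sup_edge (fun h => hr (h ▸ .refl x)) fun h => hr h.reachable⟩

theorem ncard_add_ncard_le_ncard_edgeSet [Finite V] {α : Type*} [Preorder α]
    (F : SimpleGraph V) (h : V → α) {A B : Set V}
    (hA : ∀ a ∈ A, ∃ y, F.Adj a y ∧ h y < h a)
    (hB : ∀ b ∈ B, ∃ x, F.Adj x b ∧ h b < h x)
    (hAB : ∀ a ∈ A, ∀ b ∈ B, F.Adj a b → h b < h a → False) :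
    A.ncard + B.ncard ≤ F.edgeSet.ncard := by
  choose lo hlo using hA
  choose hi hhi using hB
  let f : A ⊕ B → F.edgeSet := Sum.elim (fun a => ⟨s(a, lo a a.2), (hlo a a.2).1⟩)
    (fun b => ⟨s(hi b b.2, b), (hhi b b.2).1⟩)
  -- Two of these edges can only coincide by traversing one edge in both directions, or as an
  -- edge `a → b` excluded by `hAB`.
  have hf : f.Injective := by
    rintro (⟨a, ha⟩ | ⟨b, hb⟩) (⟨a', ha'⟩ | ⟨b', hb'⟩) he <;>
      grind [Sym2.eq_iff, lt_asymm]
  simpa [Nat.card_coe_set_eq] using Nat.card_le_card_of_injective f hf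

theorem exists_adj_dist_lt_of_not_hasLinearForest [Finite V] (hFG : F ≤ G)
    (hF : IsLinearForest F) (hmax : ¬G.HasLinearForest (F.edgeSet.ncard + 1)) (hua : G.Adj u a)
    (hu : (F.neighborSet u).ncard ≤ 1) (hra : F.Reachable r a)
    (hr : (F.neighborSet r).ncard ≤ 1) (hru : F.Reachable u a → r = u) :
    ∃ y, F.Adj a y ∧ F.dist r y < F.dist r a := by
  refine hra.exists_adj_dist_lt fun hra' => ?_
  subst hra'
  by_cases hur : F.Reachable u r
  · exact hua.ne (hru hur).symm
  · exact hmax (hasLinearForest_succ hFG hF hua hur hu hr)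

theorem exists_adj_dist_gt_of_not_hasLinearForest [Finite V] (hFG : F ≤ G)
    (hF : IsLinearForest F) (hmax : ¬G.HasLinearForest (F.edgeSet.ncard + 1)) (hua : G.Adj u a)
    (hu : (F.neighborSet u).ncard ≤ 1) (hna : ¬F.Reachable u a) (hra : F.Reachable r a) :
    ∃ y, F.Adj a y ∧ F.dist r a < F.dist r y :=
  hF.1.exists_adj_dist_gt hra
    (not_le.mp fun ha => hmax (hasLinearForest_succ hFG hF hua hna hu ha))

theorem hasLinearForest_succ_of_exchange [Finite V] (hFG : F ≤ G) (hF : IsLinearForest F)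
    (hab : F.Adj a b) (hua : G.Adj u a) (hvb : G.Adj v b) (hu : (F.neighborSet u).ncard ≤ 1)
    (hv : (F.neighborSet v).ncard ≤ 1) (huv : ¬G.Adj u v) (hr : ¬F.Reachable u v)
    (hra : F.Reachable r a) (hd : F.dist r b < F.dist r a) (hru : F.Reachable u a → r = u)
    (hva : ¬F.Reachable v a) : G.HasLinearForest (F.edgeSet.ncard + 1) := by
  set F₀ := F.deleteEdges {s(a, b)}
  have hF₀F : F₀ ≤ F := F.deleteEdges_le _
  have hab₀ : ¬F₀.Reachable a b := hF.1.not_reachable_deleteEdges hab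
  have hrb₀ : F₀.Reachable r b := by
    simpa only [F₀, Sym2.eq_swap] using
      (hra.trans hab.reachable).deleteEdges_of_dist_lt (y := a) hd
  have hua₀ : ¬F₀.Reachable u a := fun h => by
    rw [← hru (h.mono hF₀F)] at h
    exact hab₀ (h.symm.trans hrb₀)
  set F₁ := F₀ ⊔ edge u a
  have hF₁ : IsLinearForest F₁ := (hF.anti hF₀F).sup_edge hua₀
    ((Set.ncard_le_ncard (neighborSet_mono hF₀F u)).trans hu)
    (hF.ncard_neighborSet_deleteEdges_le_one hab)
  have hcard : F₁.edgeSet.ncard = F.edgeSet.ncard := by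
    have h₁ : F₁.edgeSet.ncard = F₀.edgeSet.ncard + 1 :=
      ncard_edgeSet_sup_edge hua.ne fun h => hua₀ h.reachable
    have h₀ : F₀.edgeSet.ncard + 1 = F.edgeSet.ncard := ncard_edgeSet_deleteEdges_add_one hab
    omega
  have hvb₁ : ¬F₁.Reachable v b := fun h => by
    rcases h.of_sup_edge with h | h | h
    · exact hva ((h.mono hF₀F).trans hab.symm.reachable)
    · exact hr (h.mono hF₀F).symm
    · exact hva (h.mono hF₀F)
  have hv₁ : (F₁.neighborSet v).ncard ≤ 1 := by
    rw [neighborSet_sup_edge_of_ne (by rintro rfl; exact hr (.refl _))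
      (by rintro rfl; exact hva (.refl _))]
    exact (Set.ncard_le_ncard (neighborSet_mono hF₀F v)).trans hv
  have hb₁ : (F₁.neighborSet b).ncard ≤ 1 := by
    rw [neighborSet_sup_edge_of_ne (by rintro rfl; exact huv hvb.symm) hab.ne.symm]
    simpa only [F₀, Sym2.eq_swap] using hF.ncard_neighborSet_deleteEdges_le_one hab.symm
  rw [← hcard]
  exact hasLinearForest_succ (sup_le (hF₀F.trans hFG) ((edge_le_iff G).mpr (.inr hua))) hF₁
    hvb hvb₁ hv₁ hb₁

theorem IsAcyclic.exists_root [Finite V] (hF : F.IsAcyclic) (hu : (F.neighborSet u).ncard ≤ 1) :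
    ∃ ρ : V → V, (∀ x, F.Reachable (ρ x) x) ∧ (∀ x y, F.Adj x y → ρ x = ρ y) ∧
      (∀ x, F.Reachable u x → ρ x = u) ∧ ∀ x, (F.neighborSet (ρ x)).ncard ≤ 1 := by
  have hleaf : ∀ c : F.ConnectedComponent, ∃ y, F.connectedComponentMk y = c ∧
      (F.neighborSet y).ncard ≤ 1 ∧ (F.connectedComponentMk u = c → y = u) := by
    refine ConnectedComponent.ind fun x => ?_
    by_cases hux : F.Reachable u x
    · exact ⟨u, ConnectedComponent.sound hux, hu, fun _ => rfl⟩
    · obtain ⟨y, hxy, hy⟩ := hF.exists_reachable_ncard_neighborSet_le_one x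
      exact ⟨y, ConnectedComponent.sound hxy.symm, hy,
        fun h => (hux (ConnectedComponent.exact h)).elim⟩
  choose leaf hleaf_mk hleaf_deg hleaf_u using hleaf
  exact ⟨fun x => leaf (F.connectedComponentMk x),
    fun x => ConnectedComponent.exact (hleaf_mk _),
    fun x y hxy => congrArg leaf (ConnectedComponent.sound hxy.reachable),
    fun x hux => hleaf_u _ (ConnectedComponent.sound hux), fun x => hleaf_deg _⟩

theorem ncard_neighborSet_add_ncard_neighborSet_le [Finite V] (hFG : F ≤ G)
    (hF : IsLinearForest F) (huv : ¬G.Adj u v) (hr : ¬F.Reachable u v)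
    (hu : (F.neighborSet u).ncard ≤ 1) (hv : (F.neighborSet v).ncard ≤ 1)
    (hmax : ¬G.HasLinearForest (F.edgeSet.ncard + 1)) :
    (G.neighborSet u).ncard + (G.neighborSet v).ncard ≤ F.edgeSet.ncard := by
  classical
  obtain ⟨ρ, hρ_reach, hρ_adj, hρ_u, hρ_deg⟩ := hF.1.exists_root hu
  have hv_adj : ∀ {x y}, F.Adj x y → (F.Reachable v x ↔ F.Reachable v y) := fun h =>
    ⟨(·.trans h.reachable), (·.trans h.symm.reachable)⟩
  -- Orienting each edge of `F` downhill for `h` directs the paths of `F` towards `ρ`, except in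
  -- the component of `v`, where they point away from `v`.
  let h : V → ℤ := fun x => if F.Reachable v x then -F.dist v x else F.dist (ρ x) x
  refine ncard_add_ncard_le_ncard_edgeSet F h ?_ ?_ ?_
  · intro a (ha : G.Adj u a)
    by_cases hva : F.Reachable v a
    · obtain ⟨y, hay, hy⟩ := exists_adj_dist_gt_of_not_hasLinearForest hFG hF hmax ha hu
        (fun hua => hr (hua.trans hva.symm)) hva
      refine ⟨y, hay, ?_⟩
      simp only [h, if_pos hva, if_pos ((hv_adj hay).mp hva)]
      omega
    · obtain ⟨y, hay, hy⟩ := exists_adj_dist_lt_of_not_hasLinearForest hFG hF hmax ha hu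
        (hρ_reach a) (hρ_deg a) (hρ_u a)
      refine ⟨y, hay, ?_⟩
      simp only [h, if_neg hva, if_neg (mt (hv_adj hay).mpr hva), ← hρ_adj a y hay]
      omega
  · intro b (hb : G.Adj v b)
    by_cases hvb : F.Reachable v b
    · obtain ⟨x, hbx, hx⟩ := exists_adj_dist_lt_of_not_hasLinearForest hFG hF hmax hb hv hvb hv
        fun _ => rfl
      refine ⟨x, hbx.symm, ?_⟩
      simp only [h, if_pos hvb, if_pos ((hv_adj hbx).mp hvb)]
      omega
    · obtain ⟨x, hbx, hx⟩ := exists_adj_dist_gt_of_not_hasLinearForest hFG hF hmax hb hv hvb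
        (hρ_reach b)
      refine ⟨x, hbx.symm, ?_⟩
      simp only [h, if_neg hvb, if_neg (mt (hv_adj hbx).mpr hvb), ← hρ_adj b x hbx]
      omega
  · intro a (ha : G.Adj u a) b (hb : G.Adj v b) hab hlt
    by_cases hva : F.Reachable v a
    · have hvb := (hv_adj hab).mp hva
      simp only [h, if_pos hva, if_pos hvb] at hlt
      -- the exchange with the roles of `(u, a)` and `(v, b)` swapped, rooted at `v`
      exact hmax (hasLinearForest_succ_of_exchange hFG hF hab.symm hb ha hv hu (huv ·.symm)
        (hr ·.symm) hvb (by omega) (fun _ => rfl) fun hub => hr (hub.trans hvb.symm))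
    · simp only [h, if_neg hva, if_neg (mt (hv_adj hab).mpr hva), ← hρ_adj a b hab] at hlt
      exact hmax (hasLinearForest_succ_of_exchange hFG hF hab ha hb hu hv huv hr (hρ_reach a)
        (by omega) (hρ_u a) hva)

theorem hasLinearForest_of_closureStep [Finite V] {k : ℕ} {G G' : SimpleGraph V}
    (hstep : ClosureStep k G G') (h : G'.HasLinearForest k) : G.HasLinearForest k := by
  cases hstep with | step u v _ huv hdeg => ?_
  obtain ⟨F, hFG, hF, rfl⟩ := h
  replace hFG : F ≤ G ⊔ edge u v := hFG
  by_cases hFuv : F.Adj u v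
  · by_contra hG
    have hF₀G : F.deleteEdges {s(u, v)} ≤ G := sdiff_le_iff.mpr (hFG.trans_eq (sup_comm _ _))
    have hcard := ncard_edgeSet_deleteEdges_add_one hFuv
    have := ncard_neighborSet_add_ncard_neighborSet_le hF₀G (hF.anti (F.deleteEdges_le _)) huv
      (hF.1.not_reachable_deleteEdges hFuv) (hF.ncard_neighborSet_deleteEdges_le_one hFuv)
      (by simpa only [Sym2.eq_swap] using hF.ncard_neighborSet_deleteEdges_le_one hFuv.symm)
      (by rwa [hcard])
    omega
  · exact ⟨F, Disjoint.left_le_of_le_sup_right hFG ((disjoint_edge F).mpr hFuv), hF, rfl⟩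

theorem hasLinearForest_iff_of_reflTransGen [Finite V] {k : ℕ} {G H : SimpleGraph V}
    (h : Relation.ReflTransGen (ClosureStep k) G H) :
    G.HasLinearForest k ↔ H.HasLinearForest k := by
  induction h with
  | refl => rfl
  | tail _ hstep ih =>
    refine ih.trans ⟨fun hG => hG.mono ?_, hasLinearForest_of_closureStep hstep⟩
    obtain ⟨G, u, v⟩ := hstep
    exact le_sup_left

end SimpleGraph

theorem stmt_7 (n k : ℕ) (G H : SimpleGraph (Fin n)) (hH : IsKClosure k G H) :
    (¬ ∃ F : SimpleGraph (Fin n), F ≤ G ∧ IsLinearForest F ∧ F.edgeSet.ncard = k) ↔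
    (¬ ∃ F : SimpleGraph (Fin n), F ≤ H ∧ IsLinearForest F ∧ F.edgeSet.ncard = k) :=
  (SimpleGraph.hasLinearForest_iff_of_reflTransGen hH.1).not
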